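/- Let (A,m) be a Noetherian local ring, I an m-primary ideal, J_1,...,J_s ideals, and let x ∈ J_1 be such that its image x* in the Z^{s+1}-graded algebra S = ⊕_u I^{u_0}J_1^{u_1}···J_s^{u_s}/I^{u_0+1}J_1^{u_1+1}···J_s^{u_s+1} satisfies (0 : x*)_u = 0 for u ≫ 0. Then for u ≫ 0, I^{u_0}J_1^{u_1}···J_s^{u_s} ∩ (x) = x · I^{u_0}J_1^{u_1−1}J_2^{u_2}···J_s^{u_s}. -/

import Mathlib

open IsLocalRing

/-- The length of a module, as the Krull dimension (height) of its submodule lattice. -/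
noncomputable def modLength (A M : Type*) [CommRing A] [AddCommGroup M] [Module A M] : ℕ :=
  (WithBot.unbotD 0 (Order.krullDim (Submodule A M))).toNat

/-- Length of the subquotient `p/q` of the ring `A` (for `q ≤ p`). -/
noncomputable def subquotLength (A : Type*) [CommRing A] (p q : Ideal A) : ℕ :=
  modLength A (↥p ⧸ (Submodule.comap p.subtype q))

/-- The multigraded Hilbert function of `R(I | J_1,...,J_s)`:
`u ↦ ℓ(I^{u_0}J_1^{u_1}...J_s^{u_s} / I^{u_0+1}J_1^{u_1}...J_s^{u_s})`. -/
noncomputable def mixedHF {A : Type*} [CommRing A] (I : Ideal A) {s : ℕ} (J : Fin s → Ideal A)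
    (u : Fin (s + 1) → ℕ) : ℕ :=
  subquotLength A (I ^ (u 0) * ∏ i, J i ^ (u i.succ))
    (I ^ (u 0 + 1) * ∏ i, J i ^ (u i.succ))

/-- A multivariate polynomial `P` agrees with `H` for all sufficiently large arguments. -/
def AgreesEventually {σ : Type*} (P : MvPolynomial σ ℚ) (H : (σ → ℕ) → ℕ) : Prop :=
  ∃ N : ℕ, ∀ u : σ → ℕ, (∀ i, N ≤ u i) → MvPolynomial.eval (fun i => (u i : ℚ)) P = H u

/-- A one-variable polynomial `p` agrees with `H : ℕ → ℕ` for large arguments. -/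
def AgreesEventually1 (p : Polynomial ℚ) (H : ℕ → ℕ) : Prop :=
  ∃ N : ℕ, ∀ n : ℕ, N ≤ n → Polynomial.eval (n : ℚ) p = H n

/-- The mixed multiplicity `e_α = α! ⬝ (coefficient of u^α)` read off from a Hilbert polynomial. -/
noncomputable def mixedMult {s : ℕ} (P : MvPolynomial (Fin s) ℚ) (α : Fin s → ℕ) : ℚ :=
  (∏ i, ((α i).factorial : ℚ)) * MvPolynomial.coeff (Finsupp.equivFunOnFinite.symm α) P

/-- The saturation `Q : J^∞ = ⋃ₘ (Q : J^m)`. -/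
noncomputable def Ideal.sat {A : Type*} [CommRing A] (Q J : Ideal A) : Ideal A :=
  ⨆ m : ℕ, Q.colon ((J ^ m : Ideal A) : Set A)

/-- The Hilbert-Samuel function of the module `A/Q` with respect to `I`:
`n ↦ ℓ(A/(Q + I^{n+1}))`. -/
noncomputable def samuelHF {A : Type*} [CommRing A] (I Q : Ideal A) (n : ℕ) : ℕ :=
  modLength A (A ⧸ (Q ⊔ I ^ (n + 1)))

/-- The Samuel multiplicity read off from a Hilbert-Samuel polynomial: `(deg p)! ⬝ lc(p)`. -/
noncomputable def multFromPoly (p : Polynomial ℚ) : ℚ :=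
  (p.natDegree.factorial : ℚ) * p.leadingCoeff

/-- An ideal of a local ring is `m`-primary iff it contains a power of `m`
and is contained in `m`. -/
def IsMPrimary {A : Type*} [CommRing A] [IsLocalRing A] (I : Ideal A) : Prop :=
  ∃ k : ℕ, maximalIdeal A ^ k ≤ I ∧ I ≤ maximalIdeal A

/-!
By Artin–Rees for `K = I J_1 ⋯ J_s`, an element of `I^{u_0} J^v ∩ (x)` with `u ≫ 0` is `x b`
with `b` in the fixed power `K^{N+2}`. The regularity of `x*` then raises the degree of `b`
one diagonal step at a time: if `b ∈ I^a J^w` and `x b ∈ I^{a+1} J^{w + 1 + e_1}`, then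
`b ∈ I^{a+1} J^{w+1}`, until `b ∈ I^{u_0} J^{v - e_1}`.
-/

namespace Ideal

variable {A : Type*} [CommRing A]

theorem exists_pow_add_inf_span_singleton_le [IsNoetherianRing A] (K : Ideal A) (x : A) :
    ∃ c : ℕ, ∀ n : ℕ, K ^ (n + c) ⊓ span {x} ≤ span {x} * K ^ n := by
  obtain ⟨c, hc⟩ := exists_pow_inf_eq_pow_smul K (span {x})
  refine ⟨c, fun n => ?_⟩
  have hAR := hc (n + c) (Nat.le_add_left c n)
  rw [Nat.add_sub_cancel, smul_eq_mul, mul_top] at hAR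
  rw [hAR, smul_eq_mul, mul_comm]
  exact mul_mono_left inf_le_right

section MixedProducts

variable {ι : Type*} [Fintype ι] (I : Ideal A) (J : ι → Ideal A)

theorem pow_mul_prod_pow_antitone {a b : ℕ} {p q : ι → ℕ} (hab : a ≤ b) (hpq : ∀ i, p i ≤ q i) :
    I ^ b * ∏ i, J i ^ q i ≤ I ^ a * ∏ i, J i ^ p i :=
  mul_le_mul' (pow_le_pow_right hab)
    (Finset.prod_le_prod' fun i _ => pow_le_pow_right (hpq i))

theorem prod_pow_add_ite_eq [DecidableEq ι] (i₀ : ι) (t : ι → ℕ) :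
    ∏ i, J i ^ (t i + if i = i₀ then 1 else 0) = J i₀ * ∏ i, J i ^ t i := by
  simp only [pow_add, Finset.prod_mul_distrib, pow_ite, pow_one, pow_zero,
    Finset.prod_ite_eq', Finset.mem_univ, if_true, mul_comm]

variable [DecidableEq ι] {I J} {i₀ : ι} {N u₀ : ℕ} {t : ι → ℕ} {x b : A}

/-- One step of the climb: capping the diagonal degree `n` by `u₀` and `t` keeps the
regularity hypothesis applicable after some coordinates have reached their target. -/
theorem mem_pow_mul_prod_pow_min_succ
    (hreg : ∀ (a : ℕ) (w : ι → ℕ), N ≤ a → (∀ i, N ≤ w i) →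
      (I ^ (a + 1) * ∏ i, J i ^ (w i + 1 + if i = i₀ then 1 else 0)).colon (span {x}) ⊓
          (I ^ a * ∏ i, J i ^ w i) = I ^ (a + 1) * ∏ i, J i ^ (w i + 1))
    (hu₀ : N < u₀) (ht : ∀ i, N < t i)
    (hxb : x * b ∈ I ^ u₀ * ∏ i, J i ^ (t i + if i = i₀ then 1 else 0))
    {n : ℕ} (hn : N ≤ n) (hb : b ∈ I ^ min n u₀ * ∏ i, J i ^ min n (t i)) :
    b ∈ I ^ min (n + 1) u₀ * ∏ i, J i ^ min (n + 1) (t i) := by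
  set a := min n (u₀ - 1)
  set w : ι → ℕ := fun i => min n (t i - 1)
  have hba : b ∈ I ^ a * ∏ i, J i ^ w i :=
    pow_mul_prod_pow_antitone I J (by omega) (fun i => by simp only [w]; omega) hb
  have hxba : x * b ∈ I ^ (a + 1) * ∏ i, J i ^ (w i + 1 + if i = i₀ then 1 else 0) :=
    pow_mul_prod_pow_antitone I J (by omega) (fun i => by have := ht i; simp only [w]; omega) hxb
  have hstep := hreg a w (by omega) (fun i => by have := ht i; simp only [w]; omega)
  have hmem : b ∈ I ^ (a + 1) * ∏ i, J i ^ (w i + 1) :=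
    hstep ▸ ⟨mem_colon_span_singleton.mpr (mul_comm b x ▸ hxba), hba⟩
  convert hmem using 4
  · omega
  · have := ht ‹_›
    simp only [w]
    omega

theorem mem_pow_mul_prod_pow_of_regular
    (hreg : ∀ (a : ℕ) (w : ι → ℕ), N ≤ a → (∀ i, N ≤ w i) →
      (I ^ (a + 1) * ∏ i, J i ^ (w i + 1 + if i = i₀ then 1 else 0)).colon (span {x}) ⊓
          (I ^ a * ∏ i, J i ^ w i) = I ^ (a + 1) * ∏ i, J i ^ (w i + 1))
    (hu₀ : N < u₀) (ht : ∀ i, N < t i)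
    (hxb : x * b ∈ I ^ u₀ * ∏ i, J i ^ (t i + if i = i₀ then 1 else 0))
    {n₀ : ℕ} (hn₀ : N ≤ n₀) (hb : b ∈ I ^ n₀ * ∏ i, J i ^ n₀) :
    b ∈ I ^ u₀ * ∏ i, J i ^ t i := by
  have hclimb : ∀ n, n₀ ≤ n → b ∈ I ^ min n u₀ * ∏ i, J i ^ min n (t i) := by
    intro n hn
    induction n, hn using Nat.le_induction with
    | base => exact pow_mul_prod_pow_antitone I J (min_le_left _ _) (fun _ => min_le_left _ _) hb
    | succ n hn ih => exact mem_pow_mul_prod_pow_min_succ hreg hu₀ ht hxb (hn₀.trans hn) ih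
  have hmax := hclimb (n₀ + u₀ + ∑ i, t i) (by omega)
  convert hmax using 4
  · omega
  · have := Finset.single_le_sum (fun j _ => Nat.zero_le (t j)) (Finset.mem_univ ‹ι›)
    omega

end MixedProducts

end Ideal

theorem intersection_with_principal_of_filter_regular_general
    {A : Type*} [CommRing A] [IsNoetherianRing A]
    (I : Ideal A) {s : ℕ} (J : Fin (s + 1) → Ideal A)
    (x : A) (hx : x ∈ J 0)
    (hxstar : ∃ N : ℕ, ∀ (u0 : ℕ) (v : Fin (s + 1) → ℕ), N ≤ u0 → (∀ i, N ≤ v i) →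
      ((I ^ (u0 + 1) * ∏ i, J i ^ (v i + 1 + (if i = 0 then 1 else 0))).colon
          (Ideal.span {x})) ⊓ (I ^ u0 * ∏ i, J i ^ (v i)) =
        I ^ (u0 + 1) * ∏ i, J i ^ (v i + 1)) :
    ∃ N : ℕ, ∀ (u0 : ℕ) (v : Fin (s + 1) → ℕ), N ≤ u0 → (∀ i, N ≤ v i) →
      (I ^ u0 * ∏ i, J i ^ (v i)) ⊓ Ideal.span {x} =
        Ideal.span {x} * (I ^ u0 * ∏ i, J i ^ (v i - (if i = 0 then 1 else 0))) := by
  obtain ⟨N, hreg⟩ := hxstar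
  obtain ⟨c, hAR⟩ := Ideal.exists_pow_add_inf_span_singleton_le (I * ∏ i, J i) x
  refine ⟨N + c + 2, fun u₀ v hu₀ hv => ?_⟩
  obtain ⟨t, rfl⟩ : ∃ t : Fin (s + 1) → ℕ, v = fun i => t i + if i = 0 then 1 else 0 :=
    ⟨fun i => v i - if i = 0 then 1 else 0,
      funext fun i => by have := hv i; dsimp only; split_ifs <;> omega⟩
  simp only at hv
  have ht : ∀ i, N < t i := fun i => by have := hv i; split_ifs at this <;> omega
  simp only [Nat.add_sub_cancel]
  apply le_antisymm
  · rintro y ⟨hy, hyx⟩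
    have hyK : y ∈ (I * ∏ i, J i) ^ (N + c) := by
      rw [mul_pow, ← Finset.prod_pow]
      exact Ideal.pow_mul_prod_pow_antitone I J (by omega) (fun i => by have := hv i; omega) hy
    obtain ⟨b, hb, rfl⟩ := Ideal.mem_span_singleton_mul.mp (hAR N ⟨hyK, hyx⟩)
    rw [mul_pow, ← Finset.prod_pow] at hb
    exact Ideal.mul_mem_mul (Ideal.mem_span_singleton_self x)
      (Ideal.mem_pow_mul_prod_pow_of_regular hreg (by omega) ht hy (by omega) hb)
  · refine le_inf ?_ Ideal.mul_le_left
    rw [Ideal.prod_pow_add_ite_eq, mul_left_comm]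
    gcongr
    exact (Ideal.span_singleton_le_iff_mem _).mpr hx

/-- **Lemma.** Let `x ∈ J_1` whose initial form `x*` in
`S = ⊕ᵤ I^{u_0}J_1^{u_1}⋯J_s^{u_s}/I^{u_0+1}J_1^{u_1+1}⋯J_s^{u_s+1}` satisfies
`(0 : x*)_u = 0` for `u ≫ 0`, i.e.
`(I^{u_0+1}J_1^{u_1+2}J_2^{u_2+1}⋯J_s^{u_s+1} : x) ∩ I^{u_0}J_1^{u_1}⋯J_s^{u_s}
  = I^{u_0+1}J_1^{u_1+1}⋯J_s^{u_s+1}` for `u ≫ 0`.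
Then `I^{u_0}J_1^{u_1}⋯J_s^{u_s} ∩ (x) = x ⬝ I^{u_0}J_1^{u_1-1}J_2^{u_2}⋯J_s^{u_s}`
for `u ≫ 0`.  (The ideals `J_1,…,J_s` are here indexed by `Fin (s+1)`, with `J_1 = J 0`.) -/
theorem intersection_with_principal_of_filter_regular
    {A : Type*} [CommRing A] [IsNoetherianRing A] [IsLocalRing A]
    (I : Ideal A) (hI : IsMPrimary I) {s : ℕ} (J : Fin (s + 1) → Ideal A)
    (x : A) (hx : x ∈ J 0)
    (hxstar : ∃ N : ℕ, ∀ (u0 : ℕ) (v : Fin (s + 1) → ℕ), N ≤ u0 → (∀ i, N ≤ v i) →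
      ((I ^ (u0 + 1) * ∏ i, J i ^ (v i + 1 + (if i = 0 then 1 else 0))).colon
          (Ideal.span {x})) ⊓ (I ^ u0 * ∏ i, J i ^ (v i)) =
        I ^ (u0 + 1) * ∏ i, J i ^ (v i + 1)) :
    ∃ N : ℕ, ∀ (u0 : ℕ) (v : Fin (s + 1) → ℕ), N ≤ u0 → (∀ i, N ≤ v i) →
      (I ^ u0 * ∏ i, J i ^ (v i)) ⊓ Ideal.span {x} =
        Ideal.span {x} * (I ^ u0 * ∏ i, J i ^ (v i - (if i = 0 then 1 else 0))) :=
  intersection_with_principal_of_filter_regular_general I J x hx hxstar
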